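/- arXiv:math/0207191 — 2 statements merged into one kernel-verified Lean document; each statement's English description precedes it below -/
import Mathlib

section
/- Let k ≥ 2. If C is a bilinear Hochschild 2-cocycle on S(g) (i.e. δC = 0) which is skew-symmetric in its two arguments, tangential, homogeneous of degree -(2k-1) and correct of degree -(2k-1), then C is identically zero. -/
open MvPolynomial

noncomputable section

namespace TangentialStar

/-- The symmetric algebra `S(g)` of an `m`-dimensional Lie algebra `g`, identified with the
algebra of real polynomial functions on the dual `g*` in the dual coordinates `(x_i)` of a
fixed (Jordan–Hölder) basis `(X_i)`. -/
abbrev P (m : ℕ) := MvPolynomial (Fin m) ℝ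

/-- The linear Poisson bracket on `S(g)` associated to the structure constants `c`
(`[X_i, X_j] = ∑ k, c i j k • X_k`). -/
def pb {m : ℕ} (c : Fin m → Fin m → Fin m → ℝ) (f g : P m) : P m :=
  ∑ i : Fin m, ∑ j : Fin m,
    (∑ k : Fin m, MvPolynomial.C (c i j k) * MvPolynomial.X k) * pderiv i f * pderiv j g

/-- `c` is the family of structure constants of a Lie algebra (skew-symmetry and Jacobi). -/
def IsLieStructure {m : ℕ} (c : Fin m → Fin m → Fin m → ℝ) : Prop :=
  (∀ i j k, c i j k = - c j i k) ∧
  (∀ i j l r, (∑ k : Fin m, (c i j k * c k l r + c j l k * c k i r + c l i k * c k j r)) = 0)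

/-- `c` is the family of structure constants of a nilpotent Lie algebra expressed in a
Jordan–Hölder basis, i.e. `[X_i, X_j] ≡ 0 mod (X_1, …, X_{j-1})` whenever `i ≥ j`. -/
def IsJordanHolderLie {m : ℕ} (c : Fin m → Fin m → Fin m → ℝ) : Prop :=
  IsLieStructure c ∧ (∀ i j k : Fin m, j ≤ i → j ≤ k → c i j k = 0)

/-- A polynomial on `g*` is invariant iff it Poisson-commutes with all linear functions
(for a nilpotent Lie algebra this is invariance under the coadjoint action). -/
def IsInvariant {m : ℕ} (c : Fin m → Fin m → Fin m → ℝ) (Δ : P m) : Prop :=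
  ∀ i : Fin m, pb c (MvPolynomial.X i) Δ = 0

/-- `ℝ`-linearity of a plain map. -/
def IsLin {M : Type*} [AddCommMonoid M] [Module ℝ M] (T : M → M) : Prop :=
  (∀ u v, T (u + v) = T u + T v) ∧ ∀ (r : ℝ) (u), T (r • u) = r • T u

def IsBilin {M : Type*} [AddCommMonoid M] [Module ℝ M] (Cc : M → M → M) : Prop :=
  (∀ v, IsLin fun u => Cc u v) ∧ ∀ u, IsLin (Cc u)

def IsTrilin {M : Type*} [AddCommMonoid M] [Module ℝ M] (E : M → M → M → M) : Prop :=
  (∀ v w, IsLin fun u => E u v w) ∧ (∀ u w, IsLin fun v => E u v w) ∧ ∀ u v, IsLin (E u v)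

/-- Hochschild coboundary of a `1`-cochain. -/
def hoch1 {m : ℕ} (T : P m → P m) : P m → P m → P m :=
  fun u v => u * T v - T (u * v) + T u * v

/-- Hochschild coboundary of a `2`-cochain. -/
def hoch2 {m : ℕ} (Cc : P m → P m → P m) : P m → P m → P m → P m :=
  fun u v w => u * Cc v w - Cc (u * v) w + Cc u (v * w) - Cc u v * w

/-- Hochschild coboundary of a `3`-cochain. -/
def hoch3 {m : ℕ} (E : P m → P m → P m → P m) : P m → P m → P m → P m → P m :=
  fun u v w t => u * E v w t - E (u * v) w t + E u (v * w) t - E u v (w * t) + E u v w * t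

/-- A linear map is homogeneous of degree `-n` : it sends `S^a(g)` into `S^{a-n}(g)`. -/
def Homog1 {m : ℕ} (n : ℕ) (T : P m → P m) : Prop :=
  ∀ (a : ℕ) (u : P m), u.IsHomogeneous a →
    (T u).IsHomogeneous (a - n) ∧ (a < n → T u = 0)

/-- A bilinear map is homogeneous of degree `-n` :
it sends `S^a(g) × S^b(g)` into `S^{a+b-n}(g)`. -/
def HomogBi {m : ℕ} (n : ℕ) (Cc : P m → P m → P m) : Prop :=
  ∀ (a b : ℕ) (u v : P m), u.IsHomogeneous a → v.IsHomogeneous b →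
    (Cc u v).IsHomogeneous (a + b - n) ∧ (a + b < n → Cc u v = 0)

/-- A trilinear map is homogeneous of degree `-n`. -/
def HomogTri {m : ℕ} (n : ℕ) (E : P m → P m → P m → P m) : Prop :=
  ∀ (a b cd : ℕ) (u v w : P m), u.IsHomogeneous a → v.IsHomogeneous b → w.IsHomogeneous cd →
    (E u v w).IsHomogeneous (a + b + cd - n) ∧ (a + b + cd < n → E u v w = 0)

/-- A linear map vanishes on constants. -/
def VC1 {m : ℕ} (T : P m → P m) : Prop := ∀ r : ℝ, T (MvPolynomial.C r) = 0

/-- A bilinear map vanishes on constants. -/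
def VCBi {m : ℕ} (Cc : P m → P m → P m) : Prop :=
  ∀ (r : ℝ) (v : P m), Cc (MvPolynomial.C r) v = 0 ∧ Cc v (MvPolynomial.C r) = 0

/-- A trilinear map vanishes on constants. -/
def VCTri {m : ℕ} (E : P m → P m → P m → P m) : Prop :=
  ∀ (r : ℝ) (v w : P m),
    E (MvPolynomial.C r) v w = 0 ∧ E v (MvPolynomial.C r) w = 0 ∧ E v w (MvPolynomial.C r) = 0

/-- Tangential linear operator (Definition 2): vanishes on constants and commutes with
multiplication by invariant polynomials. -/
def Tang1 {m : ℕ} (c : Fin m → Fin m → Fin m → ℝ) (T : P m → P m) : Prop :=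
  VC1 T ∧ ∀ Δ : P m, IsInvariant c Δ → ∀ u, Δ * T u = T (Δ * u)

/-- Tangential bilinear operator (Definition 2). -/
def TangBi {m : ℕ} (c : Fin m → Fin m → Fin m → ℝ) (Cc : P m → P m → P m) : Prop :=
  VCBi Cc ∧ ∀ Δ : P m, IsInvariant c Δ → ∀ u v,
    Δ * Cc u v = Cc (Δ * u) v ∧ Δ * Cc u v = Cc u (Δ * v)

/-! ### Differential operators and decompositions into differential parts -/

/-- Multi-indexes relative to the `m` variables `(x_i)`. -/
abbrev MIdx (m : ℕ) := Fin m →₀ ℕ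

/-- Length `|α|` of a multi-index. -/
def mdeg {σ : Type*} (α : σ →₀ ℕ) : ℕ := α.sum fun _ k => k

/-- The operator `∂^α` on polynomials. -/
def pdM {R : Type*} [CommSemiring R] {σ : Type*} (α : σ →₀ ℕ) :
    Module.End R (MvPolynomial σ R) :=
  (α.support.toList.map fun i =>
    ((pderiv i).toLinearMap ^ (α i) : Module.End R (MvPolynomial σ R))).prod

/-- The (possibly infinite-order, i.e. algebraic) linear operator with coefficient family
`co` : `u ↦ ∑_α co α ∂^α u` (the sum is finite on each polynomial). -/
def applyCo1 {m : ℕ} (co : MIdx m → P m) (u : P m) : P m :=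
  ∑ᶠ α : MIdx m, co α * pdM α u

/-- The differential part of total derivation order `N` of the linear operator with
coefficients `co`. -/
def applyCo1N {m : ℕ} (co : MIdx m → P m) (N : ℕ) (u : P m) : P m :=
  ∑ᶠ α : MIdx m, if mdeg α = N then co α * pdM α u else 0

def applyCoBi {m : ℕ} (co : MIdx m → MIdx m → P m) (u v : P m) : P m :=
  ∑ᶠ (α : MIdx m) (β : MIdx m), co α β * pdM α u * pdM β v

def applyCoBiN {m : ℕ} (co : MIdx m → MIdx m → P m) (N : ℕ) (u v : P m) : P m :=
  ∑ᶠ (α : MIdx m) (β : MIdx m),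
    if mdeg α + mdeg β = N then co α β * pdM α u * pdM β v else 0

def applyCoTri {m : ℕ} (co : MIdx m → MIdx m → MIdx m → P m) (u v w : P m) : P m :=
  ∑ᶠ (α : MIdx m) (β : MIdx m) (γ : MIdx m), co α β γ * pdM α u * pdM β v * pdM γ w

def applyCoTriN {m : ℕ} (co : MIdx m → MIdx m → MIdx m → P m) (N : ℕ) (u v w : P m) : P m :=
  ∑ᶠ (α : MIdx m) (β : MIdx m) (γ : MIdx m),
    if mdeg α + mdeg β + mdeg γ = N then co α β γ * pdM α u * pdM β v * pdM γ w else 0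

/-- A linear operator is differential (of finite order) iff it is a finite sum `∑ a_α ∂^α`. -/
def IsDifferential1 {m : ℕ} (T : P m → P m) : Prop :=
  ∃ (s : Finset (MIdx m)) (co : MIdx m → P m), ∀ u, T u = ∑ α ∈ s, co α * pdM α u

/-- A bilinear operator is differential iff it is a finite sum `∑ a_{αβ} ∂^α ⊗ ∂^β`. -/
def IsDifferentialBi {m : ℕ} (Cc : P m → P m → P m) : Prop :=
  ∃ (s : Finset (MIdx m × MIdx m)) (co : MIdx m × MIdx m → P m),
    ∀ u v, Cc u v = ∑ p ∈ s, co p * pdM p.1 u * pdM p.2 v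

/-- A trilinear operator is differential. -/
def IsDifferentialTri {m : ℕ} (E : P m → P m → P m → P m) : Prop :=
  ∃ (s : Finset (MIdx m × MIdx m × MIdx m)) (co : MIdx m × MIdx m × MIdx m → P m),
    ∀ u v w, E u v w = ∑ p ∈ s, co p * pdM p.1 u * pdM p.2.1 v * pdM p.2.2 w

/-! ### The algebra `ℝ(λ)[p,q]` and correctness (Definition 5) -/

/-- The field `ℝ(λ₁,…,λ_e)` of rational functions in the generic invariants. -/
abbrev KK (e : ℕ) := FractionRing (MvPolynomial (Fin e) ℝ)

/-- The algebra `ℝ(λ)[p,q]` of polynomials in `p₁,…,p_d,q₁,…,q_d` with coefficients rational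
in the `λ_k`; `Sum.inl` indexes the `p`-variables and `Sum.inr` the `q`-variables. -/
abbrev PQ (d e : ℕ) := MvPolynomial (Fin d ⊕ Fin d) (KK e)

/-- `‖u‖`, the degree of `u ∈ ℝ(λ)[p,q]` as a polynomial in the variables `p`
(`⊥` for `u = 0`). -/
def pdeg {d e : ℕ} (w : PQ d e) : WithBot ℕ :=
  w.support.sup fun s => ((∑ i : Fin d, s (Sum.inl i) : ℕ) : WithBot ℕ)

/-- The canonical (Darboux) Poisson bracket on `ℝ(λ)[p,q]`. -/
def canPB {d e : ℕ} (f g : PQ d e) : PQ d e :=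
  ∑ i : Fin d,
    (pderiv (Sum.inl i) f * pderiv (Sum.inr i) g - pderiv (Sum.inr i) f * pderiv (Sum.inl i) g)

/-- Grothendieck's inductive characterization: `D` is a differential operator of
order `≤ N` on the commutative ring `A`. -/
def IsDiffLE (A : Type*) [CommRing A] : ℕ → (A → A) → Prop
  | 0, D => ∀ a f, D (a * f) = a * D f
  | (N + 1), D => ∀ a, IsDiffLE A N fun f => D (a * f) - a * D f

/-- A differential operator `D` on `S(g)` is correct of degree `-n` : its (unique)
differential extension `D'` to the localized algebra `S(g)_I ≅ ℝ(λ)[p,q]` (the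
identification being given by `Φ`) satisfies `‖D'(u)‖ ≤ ‖u‖ - n`. -/
def CorrectDiff1 {m : ℕ} (d e : ℕ) (Φ : P m →ₐ[ℝ] PQ d e) (n : ℕ) (D : P m → P m) : Prop :=
  ∃ D' : PQ d e → PQ d e,
    (∀ u, D' (Φ u) = Φ (D u)) ∧ IsLin D' ∧ (∃ N, IsDiffLE (PQ d e) N D') ∧
    ∀ (u : PQ d e) (a : ℕ), pdeg u ≤ (a : WithBot ℕ) →
      (n ≤ a → pdeg (D' u) ≤ ((a - n : ℕ) : WithBot ℕ)) ∧ (a < n → D' u = 0)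

/-- A bidifferential operator `D` on `S(g)` is correct of degree `-n` :
`‖D'(u,v)‖ ≤ ‖u‖ + ‖v‖ - n` for its extension `D'` to `S(g)_I ≅ ℝ(λ)[p,q]`. -/
def CorrectDiffBi {m : ℕ} (d e : ℕ) (Φ : P m →ₐ[ℝ] PQ d e) (n : ℕ)
    (D : P m → P m → P m) : Prop :=
  ∃ D' : PQ d e → PQ d e → PQ d e,
    (∀ u v, D' (Φ u) (Φ v) = Φ (D u v)) ∧
    (∀ v, IsLin fun u => D' u v) ∧ (∀ u, IsLin (D' u)) ∧
    (∃ N, (∀ v, IsDiffLE (PQ d e) N fun u => D' u v) ∧ ∀ u, IsDiffLE (PQ d e) N (D' u)) ∧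
    ∀ (u v : PQ d e) (a b : ℕ), pdeg u ≤ (a : WithBot ℕ) → pdeg v ≤ (b : WithBot ℕ) →
      (n ≤ a + b → pdeg (D' u v) ≤ ((a + b - n : ℕ) : WithBot ℕ)) ∧
      (a + b < n → D' u v = 0)

/-- A tridifferential operator `D` on `S(g)` is correct of degree `-n`. -/
def CorrectDiffTri {m : ℕ} (d e : ℕ) (Φ : P m →ₐ[ℝ] PQ d e) (n : ℕ)
    (D : P m → P m → P m → P m) : Prop :=
  ∃ D' : PQ d e → PQ d e → PQ d e → PQ d e,
    (∀ u v w, D' (Φ u) (Φ v) (Φ w) = Φ (D u v w)) ∧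
    (∀ v w, IsLin fun u => D' u v w) ∧ (∀ u w, IsLin fun v => D' u v w) ∧
    (∀ u v, IsLin (D' u v)) ∧
    (∃ N, (∀ v w, IsDiffLE (PQ d e) N fun u => D' u v w) ∧
          (∀ u w, IsDiffLE (PQ d e) N fun v => D' u v w) ∧
          ∀ u v, IsDiffLE (PQ d e) N (D' u v)) ∧
    ∀ (u v w : PQ d e) (a b cd : ℕ),
      pdeg u ≤ (a : WithBot ℕ) → pdeg v ≤ (b : WithBot ℕ) → pdeg w ≤ (cd : WithBot ℕ) →
      (n ≤ a + b + cd → pdeg (D' u v w) ≤ ((a + b + cd - n : ℕ) : WithBot ℕ)) ∧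
      (a + b + cd < n → D' u v w = 0)

/-- A linear operator `T = ∑_N T_N`, differential or not, is correct of degree `-n` if all
the differential parts `T_N` of its decomposition are correct of degree `-n`. -/
def IsCorrect1 {m : ℕ} (d e : ℕ) (Φ : P m →ₐ[ℝ] PQ d e) (n : ℕ) (T : P m → P m) : Prop :=
  ∃ co : MIdx m → P m, (∀ u, T u = applyCo1 co u) ∧
    ∀ N, CorrectDiff1 d e Φ n (applyCo1N co N)

def IsCorrectBi {m : ℕ} (d e : ℕ) (Φ : P m →ₐ[ℝ] PQ d e) (n : ℕ)
    (Cc : P m → P m → P m) : Prop :=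
  ∃ co : MIdx m → MIdx m → P m, (∀ u v, Cc u v = applyCoBi co u v) ∧
    ∀ N, CorrectDiffBi d e Φ n (applyCoBiN co N)

def IsCorrectTri {m : ℕ} (d e : ℕ) (Φ : P m →ₐ[ℝ] PQ d e) (n : ℕ)
    (E : P m → P m → P m → P m) : Prop :=
  ∃ co : MIdx m → MIdx m → MIdx m → P m, (∀ u v w, E u v w = applyCoTri co u v w) ∧
    ∀ N, CorrectDiffTri d e Φ n (applyCoTriN co N)

/-- `Φ : S(g) → ℝ(λ)[p,q]`, together with the generic invariants `lam`, realizes the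
Vergne–Pedersen parametrization `(p,q,λ)` of the (Zariski-dense open set of) generic
coadjoint orbits: `Φ` is injective, identifies the localized algebra `S(g)_I` with
`ℝ(λ)[p,q]`, sends the invariants into the rational functions of the `λ_k`, and transforms
the linear Poisson bracket into the canonical one (the `(p,q)` are global Darboux
coordinates on each generic orbit). -/
def IsParam {m : ℕ} (c : Fin m → Fin m → Fin m → ℝ) (d e : ℕ)
    (Φ : P m →ₐ[ℝ] PQ d e) (lam : Fin e → P m) : Prop :=
  m = 2 * d + e ∧
  Function.Injective Φ ∧
  (∀ k, IsInvariant c (lam k)) ∧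
  (∀ k, Φ (lam k) =
    algebraMap (KK e) (PQ d e) (algebraMap (MvPolynomial (Fin e) ℝ) (KK e) (MvPolynomial.X k))) ∧
  (∀ Δ : P m, IsInvariant c Δ → ∃ κ : KK e, Φ Δ = algebraMap (KK e) (PQ d e) κ) ∧
  (∀ w : PQ d e, ∃ u Q : P m, IsInvariant c Q ∧ Q ≠ 0 ∧ w * Φ Q = Φ u) ∧
  (∀ f g : P m, Φ (pb c f g) = canPB (Φ f) (Φ g))

/-- A tangential, well graded star product of `S(g)` (Definition 9), given by the family of
cochains `Cf n` (the coefficient of `ν^n`): `C₀` is the product, `C₁` the Poisson bracket,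
`C_n(u,v) = (-1)^n C_n(v,u)`, `C_n(1,·) = 0`, each `C_n` is homogeneous of degree `-n`,
correct of degree `-n` and tangential, and the associativity identities hold. -/
structure IsTangWellGradedStar {m : ℕ} (c : Fin m → Fin m → Fin m → ℝ) (d e : ℕ)
    (Φ : P m →ₐ[ℝ] PQ d e) (Cf : ℕ → P m → P m → P m) : Prop where
  bilin : ∀ n, IsBilin (Cf n)
  zeroth : ∀ u v, Cf 0 u v = u * v
  first : ∀ u v, Cf 1 u v = pb c u v
  parity : ∀ n, 2 ≤ n → ∀ u v, Cf n u v = (-1 : ℝ) ^ n • Cf n v u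
  unit : ∀ n, 1 ≤ n → ∀ v, Cf n 1 v = 0
  homog : ∀ n, HomogBi n (Cf n)
  tang : ∀ n, 1 ≤ n → TangBi c (Cf n)
  correct : ∀ n, 2 ≤ n → IsCorrectBi d e Φ n (Cf n)
  assoc : ∀ (k : ℕ) (u v w : P m),
    ∑ p ∈ Finset.HasAntidiagonal.antidiagonal k, Cf p.1 (Cf p.2 u v) w
      = ∑ p ∈ Finset.HasAntidiagonal.antidiagonal k, Cf p.1 u (Cf p.2 v w)

/-!
A skew-symmetric Hochschild 2-cocycle is a derivation in each argument, i.e. a biderivation, so it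
is determined by its values `C(x_i, x_j)`. By homogeneity these are polynomials of degree
`2 - (2k - 1) < 0`, hence zero.
-/

section SkewCocycle

variable {A : Type*} [CommRing A] [IsAddTorsionFree A] {C : A → A → A}

/-- Adding the cocycle identities at `(c, a, b)` and `(b, c, a)`, subtracting the one at
`(a, b, c)` and using skew-symmetry leaves twice the Leibniz rule. -/
theorem leibniz_right_of_skew_of_cocycle (hskew : ∀ u v, C u v = -C v u)
    (hcocycle : ∀ u v w, u * C v w - C (u * v) w + C u (v * w) - C u v * w = 0) (a b c : A) :
    C a (b * c) = b * C a c + c * C a b := by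
  refine nsmul_right_injective two_ne_zero ?_
  simp only [two_nsmul]
  linear_combination hcocycle a b c + hcocycle b c a - hcocycle c a b + hskew (a * b) c
    + hskew (b * c) a - hskew b (c * a) - 2 * b * hskew a c

end SkewCocycle

section Biderivation

variable {σ : Type*} {C : MvPolynomial σ ℝ → MvPolynomial σ ℝ → MvPolynomial σ ℝ}

theorem eq_zero_of_leibniz_of_apply_X_eq_zero {D : MvPolynomial σ ℝ → MvPolynomial σ ℝ}
    (hlin : IsLin D) (hleib : ∀ a b, D (a * b) = a * D b + b * D a) (hX : ∀ i, D (X i) = 0)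
    (u : MvPolynomial σ ℝ) : D u = 0 :=
  let D' : Derivation ℝ (MvPolynomial σ ℝ) (MvPolynomial σ ℝ) :=
    Derivation.mk' { toFun := D, map_add' := hlin.1, map_smul' := hlin.2 } hleib
  derivation_eq_zero_of_forall_mem_vars (D := D') fun i _ => hX i

theorem eq_zero_of_skew_of_leibniz_of_apply_X_X (hlin : ∀ u, IsLin (C u))
    (hskew : ∀ u v, C u v = -C v u) (hleib : ∀ a b c, C a (b * c) = b * C a c + c * C a b)
    (hXX : ∀ i j, C (X i) (X j) = 0) (u v : MvPolynomial σ ℝ) : C u v = 0 := by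
  have hX_left (i : σ) (v) : C (X i) v = 0 :=
    eq_zero_of_leibniz_of_apply_X_eq_zero (hlin _) (hleib _) (hXX i) v
  refine eq_zero_of_leibniz_of_apply_X_eq_zero (hlin u) (hleib u) (fun j => ?_) v
  rw [hskew, hX_left, neg_zero]

end Biderivation

theorem skew_tangential_two_cocycle_vanishes_general
    (m : ℕ)
    (k : ℕ) (hk : 2 ≤ k)
    (Cc : P m → P m → P m) (hlin : IsBilin Cc)
    (hcocycle : ∀ u v w : P m, hoch2 Cc u v w = 0)
    (hskew : ∀ u v : P m, Cc u v = - Cc v u)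
    (hhom : HomogBi (2 * k - 1) Cc) :
    ∀ u v : P m, Cc u v = 0 :=
  eq_zero_of_skew_of_leibniz_of_apply_X_X hlin.2 hskew
    (leibniz_right_of_skew_of_cocycle hskew hcocycle) fun i j =>
      (hhom 1 1 _ _ (isHomogeneous_X ℝ i) (isHomogeneous_X ℝ j)).2 (by omega)

/-- Remark 11 (i). Let `k ≥ 2`. If `C` is a bilinear Hochschild 2-cocycle
on `S(g)` which is skew-symmetric in its two arguments, tangential, homogeneous of degree
`-(2k-1)` and correct of degree `-(2k-1)`, then `C` is identically zero. -/
theorem skew_tangential_two_cocycle_vanishes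
    (m : ℕ) (c : Fin m → Fin m → Fin m → ℝ) (hc : IsJordanHolderLie c)
    (d e : ℕ) (Φ : P m →ₐ[ℝ] PQ d e) (lam : Fin e → P m) (hpar : IsParam c d e Φ lam)
    (k : ℕ) (hk : 2 ≤ k)
    (Cc : P m → P m → P m) (hlin : IsBilin Cc)
    (hcocycle : ∀ u v w : P m, hoch2 Cc u v w = 0)
    (hskew : ∀ u v : P m, Cc u v = - Cc v u)
    (htang : TangBi c Cc) (hhom : HomogBi (2 * k - 1) Cc)
    (hcor : IsCorrectBi d e Φ (2 * k - 1) Cc) :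
    ∀ u v : P m, Cc u v = 0 :=
  skew_tangential_two_cocycle_vanishes_general m k hk Cc hlin hcocycle hskew hhom

end TangentialStar
end
end

section
/- For the nilpotent Lie algebra g_54, the Gutt star product ∗_G on S(g_54) is not tangential: its second order cochain C_{2,G} satisfies C_{2,G}(Δ, v) ≠ Δ·C_{2,G}(1, v) = 0 for some v ∈ S(g_54), where Δ = x_3²/2 + x_1 x_5 - x_2 x_4 is an invariant polynomial. -/
open MvPolynomial

noncomputable section

namespace TangentialStar

/-! ### The Gutt star product -/

/-- `σm : S(g) ≃ U(g)` is the symmetrization map onto the universal enveloping algebra `U`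
of `g` : it is a linear bijection sending powers of affine elements to powers, it satisfies
the bracket relation `σ(X)σ(Y) - σ(Y)σ(X) = σ({X,Y})` on the generators, and `U` is
generated as an algebra by `σ(g)`. -/
def IsSymmetrization {m : ℕ} (c : Fin m → Fin m → Fin m → ℝ) {U : Type*} [Ring U]
    [Algebra ℝ U] (σm : P m ≃ₗ[ℝ] U) : Prop :=
  σm 1 = 1 ∧
  (∀ f : P m, f.totalDegree ≤ 1 → ∀ k : ℕ, σm (f ^ k) = σm f ^ k) ∧
  (∀ i j, σm (MvPolynomial.X i) * σm (MvPolynomial.X j)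
      - σm (MvPolynomial.X j) * σm (MvPolynomial.X i)
      = σm (pb c (MvPolynomial.X i) (MvPolynomial.X j))) ∧
  Algebra.adjoin ℝ (Set.range fun i => σm (MvPolynomial.X i)) = ⊤

/-- The cochains of the Gutt star product:
`C_{n,G}(P,Q) = 2^n σ⁻¹([σ(P_r)·σ(Q_s)]_{r+s-n})`, summed over the homogeneous components
`P_r`, `Q_s` of `P`, `Q`, where `[·]_k` denotes the component in `σ(S^k(g))` relative to the
decomposition `U(g) = ⊕_k σ(S^k(g))`. -/
def guttC {m : ℕ} {U : Type*} [Ring U] [Algebra ℝ U] (σm : P m ≃ₗ[ℝ] U) (n : ℕ)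
    (u v : P m) : P m :=
  ∑ᶠ (r : ℕ) (s : ℕ),
    if n ≤ r + s then
      (2 : ℝ) ^ n •
        homogeneousComponent (r + s - n)
          (σm.symm (σm (homogeneousComponent r u) * σm (homogeneousComponent s v)))
    else 0

/-! ### The nilpotent Lie algebra `g₅₄` -/

/-- Structure constants of the `5`-dimensional nilpotent Lie algebra `g₅₄`:
`[X₅,X₄] = X₃`, `[X₅,X₃] = X₂`, `[X₄,X₃] = X₁` (indices shifted by one: `X i` is `X_{i+1}`,
and `x_{i+1}` is `MvPolynomial.X i`). -/
def c54 : Fin 5 → Fin 5 → Fin 5 → ℝ := fun i j k =>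
  if i = 4 ∧ j = 3 ∧ k = 2 then 1
  else if i = 3 ∧ j = 4 ∧ k = 2 then -1
  else if i = 4 ∧ j = 2 ∧ k = 1 then 1
  else if i = 2 ∧ j = 4 ∧ k = 1 then -1
  else if i = 3 ∧ j = 2 ∧ k = 0 then 1
  else if i = 2 ∧ j = 3 ∧ k = 0 then -1
  else 0

/-- The invariant polynomial `Δ = x₃²/2 + x₁x₅ - x₂x₄` on `g₅₄*`. -/
def Δ54 : P 5 :=
  MvPolynomial.C (1 / 2 : ℝ) * MvPolynomial.X 2 ^ 2
    + MvPolynomial.X 0 * MvPolynomial.X 4 - MvPolynomial.X 1 * MvPolynomial.X 3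

/-! The symmetrization `σ` satisfies `σ(ℓ ^ k) = σ(ℓ) ^ k` for linear forms `ℓ`, so it sends a
combination of powers of linear forms to the same combination of powers of the `σ(x_i)`. Writing
`2Δ` as a combination of squares and `48 Δ x₅²` as a combination of fourth powers, and reordering
the fourth powers in `U(g₅₄)` with its commutation relations, gives
`σ(Δ) σ(x₅²) = σ(Δ x₅² + x₂²/12)`. Hence `C_{2,G}(Δ, x₅²) = 4 · x₂²/12 ≠ 0`, whereas
`C_{2,G}(1, ·) = 0` because `σ(1) = 1`. -/

section Polarization

variable {R : Type*} [Ring R]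

def deltaPolarization (a b c d e : R) : R :=
  c ^ 2 + ((a + e) ^ 2 - a ^ 2 - e ^ 2) - ((b + d) ^ 2 - b ^ 2 - d ^ 2)

/-- In a commutative ring this is `24 • (deltaPolarization a b c d e * e ^ 2)`: its three groups
of fourth powers isolate the monomials `a e³`, `b d e²` and `c² e²` by polarization. -/
def deltaX5SqPolarization (a b c d e : R) : R :=
  (a + 2 • e) ^ 4 - (a - 2 • e) ^ 4 - 2 • (a + e) ^ 4 + 2 • (a - e) ^ 4
    - ((b + d + e) ^ 4 + (b + d - e) ^ 4 - (b - d + e) ^ 4 - (b - d - e) ^ 4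
      - 2 • (b + d) ^ 4 + 2 • (b - d) ^ 4)
    + 2 • (c + e) ^ 4 + 2 • (c - e) ^ 4 - 4 • c ^ 4 - 4 • e ^ 4

/-- The relations of `U(g₅₄)` on `a, …, e = σ(x₁), …, σ(x₅)`, each oriented to move the later
generator to the right. -/
structure G54Relations (a b c d e : R) : Prop where
  ba : b * a = a * b
  ca : c * a = a * c
  da : d * a = a * d
  ea : e * a = a * e
  cb : c * b = b * c
  db : d * b = b * d
  eb : e * b = b * e
  dc : d * c = c * d + a
  ec : e * c = c * e + b
  ed : e * d = d * e + c

lemma G54Relations.deltaX5SqPolarization_eq {a b c d e : R}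
    (h : G54Relations a b c d e) :
    deltaX5SqPolarization a b c d e = 24 • (deltaPolarization a b c d e * e ^ 2) - 4 • b ^ 2 := by
  have mul_mul_of_eq {x y z : R} (hxy : x * y = z) (t : R) : x * (y * t) = z * t := by
    rw [← mul_assoc, hxy]
  simp only [deltaX5SqPolarization, deltaPolarization, pow_succ, pow_zero, one_mul,
    smul_add, smul_sub, smul_mul_assoc, mul_smul_comm, mul_add, add_mul, mul_sub, sub_mul,
    mul_assoc,
    h.ba, h.da, h.ea, h.cb, h.db, h.eb, h.dc, h.ec, h.ed,
    mul_mul_of_eq h.ea, mul_mul_of_eq h.cb, mul_mul_of_eq h.db, mul_mul_of_eq h.eb,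
    mul_mul_of_eq h.dc, mul_mul_of_eq h.ec, mul_mul_of_eq h.ed]
  noncomm_ring

end Polarization

lemma pb_X_X {m : ℕ} (c : Fin m → Fin m → Fin m → ℝ) (i j : Fin m) :
    pb c (X i) (X j) = ∑ k, C (c i j k) * X k := by
  classical
  simp [pb, pderiv_X, Pi.single_apply, mul_ite, Finset.sum_ite_eq]

section Symmetrization

variable {m : ℕ} {c : Fin m → Fin m → Fin m → ℝ} {U : Type*} [Ring U] [Algebra ℝ U]
  {σm : P m ≃ₗ[ℝ] U}

lemma IsSymmetrization.mul_X_X (hσ : IsSymmetrization c σm) (i j : Fin m) :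
    σm (X i) * σm (X j) = σm (X j) * σm (X i) + ∑ k, c i j k • σm (X k) := by
  rw [← sub_eq_iff_eq_add', hσ.2.2.1, pb_X_X]
  simp [C_mul']

lemma IsSymmetrization.map_pow (hσ : IsSymmetrization c σm) {f : P m}
    (hf : f ∈ restrictTotalDegree (Fin m) ℝ 1) (k : ℕ) : σm (f ^ k) = σm f ^ k :=
  hσ.2.1 f ((mem_restrictTotalDegree _ _ _).1 hf) k

lemma X_mem_restrictTotalDegree_one (i : Fin m) :
    (X i : P m) ∈ restrictTotalDegree (Fin m) ℝ 1 :=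
  (mem_restrictTotalDegree _ _ _).2 (totalDegree_X i).le

lemma IsSymmetrization.map_deltaPolarization (hσ : IsSymmetrization c σm)
    (i₁ i₂ i₃ i₄ i₅ : Fin m) :
    σm (deltaPolarization (X i₁) (X i₂) (X i₃) (X i₄) (X i₅)) =
      deltaPolarization (σm (X i₁)) (σm (X i₂)) (σm (X i₃)) (σm (X i₄)) (σm (X i₅)) := by
  simp only [deltaPolarization, map_add, map_sub, hσ.map_pow, add_mem,
    X_mem_restrictTotalDegree_one]

lemma IsSymmetrization.map_deltaX5SqPolarization (hσ : IsSymmetrization c σm)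
    (i₁ i₂ i₃ i₄ i₅ : Fin m) :
    σm (deltaX5SqPolarization (X i₁) (X i₂) (X i₃) (X i₄) (X i₅)) =
      deltaX5SqPolarization (σm (X i₁)) (σm (X i₂)) (σm (X i₃)) (σm (X i₄)) (σm (X i₅)) := by
  simp (maxDischargeDepth := 4) only [deltaX5SqPolarization, map_add, map_sub, map_nsmul,
    hσ.map_pow, add_mem, sub_mem, nsmul_mem, X_mem_restrictTotalDegree_one]

end Symmetrization

section GuttCochain

variable {m : ℕ} {U : Type*} [Ring U] [Algebra ℝ U] {σm : P m ≃ₗ[ℝ] U}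

lemma guttC_one_left (hσ1 : σm 1 = 1) {n : ℕ} (hn : 1 ≤ n) (v : P m) : guttC σm n 1 v = 0 := by
  classical
  have hcomp1 (r : ℕ) : homogeneousComponent r (1 : P m) = if r = 0 then 1 else 0 :=
    homogeneousComponent_of_mem (isHomogeneous_one _ _)
  unfold guttC
  rw [finsum_eq_single _ 0 fun r hr => by simp [hcomp1, hr]]
  refine finsum_eq_zero_of_forall_eq_zero fun s => ?_
  simp only [hcomp1, if_true, hσ1, one_mul, LinearEquiv.symm_apply_apply, zero_add]
  split_ifs with hs
  · rw [homogeneousComponent_of_mem (homogeneousComponent_isHomogeneous s v), if_neg (by omega),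
      smul_zero]
  · rfl

lemma guttC_of_isHomogeneous {n r s : ℕ} {u v : P m} (hu : u.IsHomogeneous r)
    (hv : v.IsHomogeneous s) (hn : n ≤ r + s) :
    guttC σm n u v = (2 : ℝ) ^ n • homogeneousComponent (r + s - n) (σm.symm (σm u * σm v)) := by
  classical
  have hcompu (r' : ℕ) : homogeneousComponent r' u = if r' = r then u else 0 :=
    homogeneousComponent_of_mem hu
  have hcompv (s' : ℕ) : homogeneousComponent s' v = if s' = s then v else 0 :=
    homogeneousComponent_of_mem hv
  unfold guttC
  rw [finsum_eq_single _ r fun r' hr' => by simp [hcompu, hr'],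
    finsum_eq_single _ s fun s' hs' => by simp [hcompv, hs']]
  simp [hcompu, hcompv, hn]

end GuttCochain

lemma C_inv_two_mul_two {σ : Type*} : (C (2⁻¹ : ℝ) : MvPolynomial σ ℝ) * 2 = 1 := by
  rw [← map_ofNat (C : ℝ →+* MvPolynomial σ ℝ) 2, ← map_mul]
  norm_num

section G54

variable {U : Type*} [Ring U] [Algebra ℝ U] {σm : P 5 ≃ₗ[ℝ] U}

lemma isInvariant_Δ54 : IsInvariant c54 Δ54 := by
  intro i
  fin_cases i <;> simp [pb, Δ54, c54, Fin.sum_univ_five, pderiv_X, Pi.single_apply]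
  · ring
  · linear_combination (X 0 * X 2 : P 5) * C_inv_two_mul_two
  · linear_combination (X 1 * X 2 : P 5) * C_inv_two_mul_two

lemma isHomogeneous_Δ54 : Δ54.IsHomogeneous 2 :=
  ((isHomogeneous_C_mul_X_pow _ 2 2).add ((isHomogeneous_X ℝ 0).mul (isHomogeneous_X ℝ 4))).sub
    ((isHomogeneous_X ℝ 1).mul (isHomogeneous_X ℝ 3))

lemma IsSymmetrization.g54Relations (hσ : IsSymmetrization c54 σm) :
    G54Relations (σm (X 0)) (σm (X 1)) (σm (X 2)) (σm (X 3)) (σm (X 4)) := by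
  constructor <;> rw [hσ.mul_X_X] <;> simp [c54, add_comm]

lemma deltaPolarization_X :
    deltaPolarization (X 0 : P 5) (X 1) (X 2) (X 3) (X 4) = (2 : ℝ) • Δ54 := by
  rw [smul_eq_C_mul, map_ofNat C 2, deltaPolarization, Δ54, one_div]
  linear_combination (-X 2 ^ 2 : P 5) * C_inv_two_mul_two

lemma deltaX5SqPolarization_X :
    deltaX5SqPolarization (X 0 : P 5) (X 1) (X 2) (X 3) (X 4) = (48 : ℝ) • (Δ54 * X 4 ^ 2) := by
  rw [smul_eq_C_mul, map_ofNat C 48, deltaX5SqPolarization, Δ54, one_div]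
  simp only [nsmul_eq_mul, Nat.cast_ofNat]
  linear_combination (-24 * X 2 ^ 2 * X 4 ^ 2 : P 5) * C_inv_two_mul_two

lemma IsSymmetrization.symm_mul_Δ54_X4_sq (hσ : IsSymmetrization c54 σm) :
    σm.symm (σm Δ54 * σm (X 4 ^ 2)) = Δ54 * X 4 ^ 2 + (12 : ℝ)⁻¹ • X 1 ^ 2 := by
  have hΔ : σm Δ54 =
      (2 : ℝ)⁻¹ • deltaPolarization (σm (X 0)) (σm (X 1)) (σm (X 2)) (σm (X 3)) (σm (X 4)) := by
    rw [← hσ.map_deltaPolarization, deltaPolarization_X, map_smul, smul_smul]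
    norm_num
  have hΔX4 : σm (Δ54 * X 4 ^ 2) =
      (48 : ℝ)⁻¹ •
        deltaX5SqPolarization (σm (X 0)) (σm (X 1)) (σm (X 2)) (σm (X 3)) (σm (X 4)) := by
    rw [← hσ.map_deltaX5SqPolarization, deltaX5SqPolarization_X, map_smul, smul_smul]
    norm_num
  rw [LinearEquiv.symm_apply_eq, map_add, map_smul, hΔX4, hΔ,
    hσ.g54Relations.deltaX5SqPolarization_eq, hσ.map_pow (X_mem_restrictTotalDegree_one 4),
    hσ.map_pow (X_mem_restrictTotalDegree_one 1)]
  simp only [smul_mul_assoc, ← Nat.cast_smul_eq_nsmul ℝ]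
  module

end G54

/-- For the nilpotent Lie algebra `g₅₄`, the Gutt star product on
`S(g₅₄)` is not tangential: the invariant polynomial `Δ = x₃²/2 + x₁x₅ - x₂x₄` and its
second order cochain `C_{2,G}` satisfy `C_{2,G}(Δ, v) ≠ Δ · C_{2,G}(1, v) = 0` for some
`v ∈ S(g₅₄)`. -/
theorem gutt_star_product_not_tangential_g54
    (U : Type) [Ring U] [Algebra ℝ U] (σm : P 5 ≃ₗ[ℝ] U)
    (hσ : IsSymmetrization c54 σm) :
    IsInvariant c54 Δ54 ∧
    (∀ v : P 5, guttC σm 2 1 v = 0) ∧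
    (∃ v : P 5, guttC σm 2 Δ54 v ≠ Δ54 * guttC σm 2 1 v) ∧
    ¬ TangBi c54 (guttC σm 2) := by
  have hone (v : P 5) : guttC σm 2 1 v = 0 := guttC_one_left hσ.1 one_le_two v
  have hΔ : guttC σm 2 Δ54 (X 4 ^ 2) = (3 : ℝ)⁻¹ • X 1 ^ 2 := by
    rw [guttC_of_isHomogeneous isHomogeneous_Δ54 (isHomogeneous_X_pow 4 2) le_add_self,
      hσ.symm_mul_Δ54_X4_sq, map_add, map_smul,
      homogeneousComponent_of_mem (isHomogeneous_Δ54.mul (isHomogeneous_X_pow 4 2)),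
      homogeneousComponent_eq_self (isHomogeneous_X_pow 1 2)]
    norm_num [smul_smul]
  have hne : guttC σm 2 Δ54 (X 4 ^ 2) ≠ Δ54 * guttC σm 2 1 (X 4 ^ 2) := by
    rw [hΔ, hone, mul_zero, smul_ne_zero_iff]
    exact ⟨by norm_num, pow_ne_zero _ (X_ne_zero _)⟩
  refine ⟨isInvariant_Δ54, hone, ⟨X 4 ^ 2, hne⟩, fun htang => hne ?_⟩
  simpa using ((htang.2 Δ54 isInvariant_Δ54 1 (X 4 ^ 2)).1).symm

end TangentialStar
end
end
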